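/- Let p be a prime, θ an infinite cardinal, μ̄ = ⟨μ_n : n < ω⟩ a sequence of cardinals, and set t_ℓ = p for all ℓ. Assume that ∏_{ℓ<ω}[μ_ℓ]^{p} is not a union of at most θ many members of J⁴_{t̄,μ̄} (this holds, for instance, when μ_n ≥ beth_{p−1}(θ)⁺ for all n). Then the torsion-complete group B̂_{μ̄} is not a union of at most θ many members of I⁰_{μ̄}; in other words, the ideal I¹_{μ̄,θ} on B̂_{μ̄} is proper. -/

import Mathlib

/-!
Send `ν ∈ ∏_ℓ [μ_ℓ]^p` to `toBhat ν = ∑ₙ pⁿ 1_{ν n} ∈ B̂_{μ̄}`; a cover of `B̂_{μ̄}` by `θ` members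
of `I⁰_{μ̄}` pulls back to a cover of `∏_ℓ [μ_ℓ]^p` by `θ` sets, and each of them lies in `J⁴`.
Indeed, if `A ∈ I⁰_{μ̄}` and the pullback of `A` has systems for `B ⊆ μ_ℓ` and every `k > ℓ`, take
`T ⊆ B` of size `p + 1` and `a ≠ b` in `T`. Summing `toBhat ν_η` over the tree of `η`'s below
`T ∖ {b}` and `T ∖ {a}`, where each level `m` branches into the `p`-subsets of a `(p+1)`-subset
of the set `E` of clause (c), gives an element of `⟨A⟩` that agrees below `k` with
`x = pˡ (x^ℓ_a - x^ℓ_b)` and is divisible by `pᵏ` above. So `x ∈ cl⟨A⟩ ∩ B_{μ̄}`, yet `x ∉ B_{μ̄↾ℓ}`.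
-/

/-- Relative beth numbers: `beth₀(θ) = θ`, `beth_{n+1}(θ) = 2^{beth_n(θ)}`. -/
def bethRel (θ : Cardinal) : ℕ → Cardinal
  | 0 => θ
  | n + 1 => 2 ^ bethRel θ n

/-- The set `∏_{ℓ<ω} [μ_ℓ]^{t_ℓ}` of sequences `ν` with `ν ℓ ⊆ μ_ℓ` of size exactly `t ℓ`. -/
def FullProd (t : ℕ → ℕ) (mu : ℕ → Cardinal) : Set (∀ ℓ, Set (mu ℓ).ord.ToType) :=
  {ν | ∀ ℓ, (ν ℓ).Finite ∧ (ν ℓ).ncard = t ℓ}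

/-- `η` is a member of `∏_{i∈[ℓ,k)} [ω]^{t_i}` (only coordinates in `[ℓ,k)` matter). -/
def SeqIdx (t : ℕ → ℕ) (ℓ k : ℕ) (η : ℕ → Set ℕ) : Prop :=
  ∀ i, ℓ ≤ i → i < k → (η i).Finite ∧ (η i).ncard = t i

/-- The system `⟨ν_η : η ∈ ∏_{i∈[ℓ,k)}[ω]^{t_i}⟩` witnessing clauses (a),(b),(c) of the
definition of `J⁴_{t̄,μ̄}` for the countably infinite set `B ⊆ μ_ℓ`. -/
def IsJ4System (t : ℕ → ℕ) (mu : ℕ → Cardinal) (A : Set (∀ ℓ, Set (mu ℓ).ord.ToType))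
    (ℓ k : ℕ) (B : Set (mu ℓ).ord.ToType)
    (ν : (ℕ → Set ℕ) → (∀ j, Set (mu j).ord.ToType)) : Prop :=
  (∀ η, SeqIdx t ℓ k η → ν η ∈ A) ∧
  (∀ η₁ η₂, SeqIdx t ℓ k η₁ → SeqIdx t ℓ k η₂ → ∀ m, ℓ ≤ m → m ≤ k →
    (∀ i, ℓ ≤ i → i < m → η₁ i = η₂ i) → ∀ j, j < m → ν η₁ j = ν η₂ j) ∧
  (∀ η₀, SeqIdx t ℓ k η₀ → ℓ < k →
    {u : Set (mu ℓ).ord.ToType | u ⊆ B ∧ u.Finite ∧ u.ncard = t ℓ} =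
      {v | ∃ η, SeqIdx t ℓ k η ∧ v = ν η ℓ}) ∧
  (∀ η₀, SeqIdx t ℓ k η₀ → ∀ m, ℓ ≤ m → m < k →
    ∃ E : Set (mu m).ord.ToType, E.Countable ∧ E.Infinite ∧
      {u : Set (mu m).ord.ToType | u ⊆ E ∧ u.Finite ∧ u.ncard = t m} =
        {v | ∃ η, SeqIdx t ℓ k η ∧ (∀ i, ℓ ≤ i → i < m → η i = η₀ i) ∧ v = ν η m})

/-- Membership in the ideal `J⁴_{t̄,μ̄}`. -/
def InJ4 (t : ℕ → ℕ) (mu : ℕ → Cardinal) (A : Set (∀ ℓ, Set (mu ℓ).ord.ToType)) : Prop :=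
  ∃ L : ℕ, ∀ ℓ, L ≤ ℓ → ∀ B : Set (mu ℓ).ord.ToType, B.Countable → B.Infinite →
    ∃ k, ℓ < k ∧ ¬ ∃ ν, IsJ4System t mu A ℓ k B ν

/-- The ambient product group `∏_{n<ω} B_{μ_n}` where `B_{μ_n} = ⊕_{α<μ_n} ℤ/p^{n+1}ℤ`;
the torsion completion `B̂_{μ̄}` is its subset of elements of bounded order. -/
abbrev BProd (p : ℕ) (mu : ℕ → Cardinal) : Type :=
  ∀ n : ℕ, ((mu n).ord.ToType →₀ ZMod (p ^ (n + 1)))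

/-- The torsion completion `B̂_{μ̄}` of `B_{μ̄} = ⊕_{n<ω} ⊕_{α<μ_n} ℤ/p^{n+1}ℤ`, realized as
the set of elements of bounded order in `∏_n B_{μ_n}`. -/
def BhatSet (p : ℕ) (mu : ℕ → Cardinal) : Set (BProd p mu) :=
  {x | ∃ k : ℕ, ∀ n, (p ^ k) • x n = 0}

/-- `B_{μ̄}` inside `B̂_{μ̄}`: the elements with finitely many nonzero components. -/
def BFin (p : ℕ) (mu : ℕ → Cardinal) : Set (BProd p mu) :=
  {x | {n | x n ≠ 0}.Finite}

/-- `B_{μ̄↾n}`: the elements supported on components `< n`. -/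
def BSeg (p : ℕ) (mu : ℕ → Cardinal) (n : ℕ) : Set (BProd p mu) :=
  {x | ∀ m, n ≤ m → x m = 0}

/-- The closure `cl(X)` in `B̂_{μ̄}`: points of `B̂_{μ̄}` approximated modulo `pⁿB̂_{μ̄}` by
members of `X`, for every `n`. -/
def clBhat (p : ℕ) (mu : ℕ → Cardinal) (X : Set (BProd p mu)) : Set (BProd p mu) :=
  {x | x ∈ BhatSet p mu ∧ ∀ n : ℕ, ∃ y ∈ X, ∃ z ∈ BhatSet p mu, (p ^ n) • z = x - y}

/-- The ideal `I⁰_{μ̄}`: sets `A ⊆ B̂_{μ̄}` such that for every large enough `n`,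
`cl(⟨A⟩) ∩ B_{μ̄} ⊆ B_{μ̄↾n}`. -/
def InI0 (p : ℕ) (mu : ℕ → Cardinal) (A : Set (BProd p mu)) : Prop :=
  A ⊆ BhatSet p mu ∧ ∃ N : ℕ, ∀ n, N ≤ n →
    clBhat p mu (AddSubgroup.closure A : Set (BProd p mu)) ∩ BFin p mu ⊆ BSeg p mu n

open Finset

theorem Finset.sum_sum_erase_eq_nsmul {α M : Type*} [DecidableEq α] [AddCommGroup M]
    {T : Finset α} {n : ℕ} (hT : #T = n + 1) (f : α → M) :
    ∑ a ∈ T, ∑ b ∈ T.erase a, f b = n • ∑ b ∈ T, f b := by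
  rw [sum_congr rfl fun a ha => sum_erase_eq_sub ha, sum_sub_distrib, sum_const, hT,
    succ_nsmul, add_sub_cancel_right]

theorem Finset.coe_erase_subset_finite_ncard {α : Type*} [DecidableEq α] {E : Set α}
    {T : Finset α} {n : ℕ} (hTE : ↑T ⊆ E) (hT : #T = n + 1) {a : α} (ha : a ∈ T) :
    ↑(T.erase a) ⊆ E ∧ (↑(T.erase a) : Set α).Finite ∧ (↑(T.erase a) : Set α).ncard = n :=
  ⟨(coe_subset.2 (erase_subset a T)).trans hTE, finite_toSet _,
    by rw [Set.ncard_coe_finset, card_erase_of_mem ha, hT, Nat.add_sub_cancel]⟩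

theorem natCast_pow_ne_zero_zmod {p : ℕ} (hp : 1 < p) (ℓ : ℕ) :
    ((p ^ ℓ : ℕ) : ZMod (p ^ (ℓ + 1))) ≠ 0 := by
  rw [Ne, ZMod.natCast_eq_zero_iff, Nat.pow_dvd_pow_iff_le_right hp]
  omega

section BProd

variable {p : ℕ} {mu : ℕ → Cardinal}

variable (p mu) in
def powDivisible : AddSubgroup (BProd p mu) where
  carrier := {v | ∀ j, ∃ w, v j = p ^ j • w}
  add_mem' {v v'} hv hv' j := by
    obtain ⟨w, hw⟩ := hv j
    obtain ⟨w', hw'⟩ := hv' j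
    exact ⟨w + w', by rw [Pi.add_apply, hw, hw', smul_add]⟩
  zero_mem' _ := ⟨0, (smul_zero _).symm⟩
  neg_mem' {v} hv j := by
    obtain ⟨w, hw⟩ := hv j
    exact ⟨-w, by rw [Pi.neg_apply, hw, smul_neg]⟩

theorem p_smul_apply_eq_zero_of_mem_powDivisible {v : BProd p mu}
    (hv : v ∈ powDivisible p mu) (j : ℕ) : p • v j = 0 := by
  obtain ⟨w, hw⟩ := hv j
  rw [hw, smul_smul, ← pow_succ', ZModModule.char_nsmul_eq_zero]

theorem mem_bhatSet_of_mem_powDivisible {v : BProd p mu} (hv : v ∈ powDivisible p mu) :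
    v ∈ BhatSet p mu :=
  ⟨1, fun j => by rw [pow_one, p_smul_apply_eq_zero_of_mem_powDivisible hv]⟩

theorem exists_mem_bhatSet_pow_smul_eq {v : BProd p mu} (hv : v ∈ powDivisible p mu) {n : ℕ}
    (hlow : ∀ j < n, v j = 0) : ∃ z ∈ BhatSet p mu, p ^ n • z = v := by
  choose w hw using hv
  refine ⟨fun j => if n ≤ j then p ^ (j - n) • w j else 0, ⟨n + 1, fun j => ?_⟩,
    funext fun j => ?_⟩
  · dsimp only
    split_ifs with h
    · rw [smul_smul, ← pow_add, show n + 1 + (j - n) = j + 1 by omega,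
        ZModModule.char_nsmul_eq_zero]
    · exact smul_zero _
  · dsimp only [Pi.smul_apply]
    split_ifs with h
    · rw [smul_smul, ← pow_add, Nat.add_sub_cancel' h, hw]
    · rw [smul_zero, hlow j (by omega)]

variable (p mu) in
/-- The map `ν ↦ ∑ₙ pⁿ ∑_{α ∈ ν n} xⁿ_α`; the `finsum` is junk `0` on infinite `ν n`. -/
noncomputable def toBhat (ν : ∀ ℓ, Set (mu ℓ).ord.ToType) : BProd p mu :=
  fun j => p ^ j • ∑ᶠ a ∈ ν j, Finsupp.single a 1

theorem toBhat_mem_powDivisible (ν : ∀ ℓ, Set (mu ℓ).ord.ToType) :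
    toBhat p mu ν ∈ powDivisible p mu :=
  fun _ => ⟨_, rfl⟩

theorem toBhat_apply_congr {ν ν' : ∀ ℓ, Set (mu ℓ).ord.ToType} {j : ℕ} (h : ν j = ν' j) :
    toBhat p mu ν j = toBhat p mu ν' j := by
  simp only [toBhat, h]

theorem toBhat_apply_of_eq_coe {ν : ∀ ℓ, Set (mu ℓ).ord.ToType} {j : ℕ}
    {s : Finset (mu j).ord.ToType} (h : ν j = s) :
    toBhat p mu ν j = p ^ j • ∑ a ∈ s, Finsupp.single a 1 := by
  simp only [toBhat, h, finsum_mem_coe_finset]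

end BProd

section J4System

variable {p : ℕ} {mu : ℕ → Cardinal} {A : Set (∀ ℓ, Set (mu ℓ).ord.ToType)} {ℓ k : ℕ}
  {B : Set (mu ℓ).ord.ToType} {ν : (ℕ → Set ℕ) → ∀ j, Set (mu j).ord.ToType}

theorem sum_toBhat_apply_eq_zero {m : ℕ} {T : Finset (mu m).ord.ToType} (hT : #T = p + 1)
    (ν' : (mu m).ord.ToType → ∀ j, Set (mu j).ord.ToType) (hν' : ∀ a ∈ T, ν' a m = T.erase a) :
    ∑ a ∈ T, toBhat p mu (ν' a) m = 0 := by
  rw [sum_congr rfl fun a ha => toBhat_apply_of_eq_coe (hν' a ha), ← smul_sum,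
    sum_sum_erase_eq_nsmul hT, smul_smul, ← pow_succ, ZModModule.char_nsmul_eq_zero]

/-- Summing over the `p + 1` children `T.erase a` of a node clears level `m`, where the sum is
`pᵐ • p • 1_T = 0`, while below `m` it multiplies the common value by `p + 1`, which acts as `1`. -/
theorem IsJ4System.exists_mem_closure_toBhat (hsys : IsJ4System (fun _ => p) mu A ℓ k B ν)
    {m : ℕ} (hℓm : ℓ ≤ m) (hmk : m ≤ k) {η₀ : ℕ → Set ℕ}
    (hη₀ : SeqIdx (fun _ => p) ℓ k η₀) :
    ∃ y ∈ AddSubgroup.closure (toBhat p mu '' A) ⊓ powDivisible p mu,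
      (∀ j < m, y j = toBhat p mu (ν η₀) j) ∧ ∀ j, m ≤ j → j < k → y j = 0 := by
  obtain ⟨d, hd⟩ := Nat.exists_eq_add_of_le hmk
  induction d generalizing m η₀ with
  | zero =>
    refine ⟨toBhat p mu (ν η₀), ⟨AddSubgroup.subset_closure ⟨_, hsys.1 η₀ hη₀, rfl⟩,
      toBhat_mem_powDivisible _⟩, fun _ _ => rfl, fun j _ _ => by omega⟩
  | succ d ih =>
    obtain ⟨E, -, hE, hEsets⟩ := hsys.2.2.2 η₀ hη₀ m hℓm (by omega)
    obtain ⟨T, hTE, hT⟩ := hE.exists_subset_card_eq (p + 1)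
    have hchild : ∀ a ∈ T, ∃ η, SeqIdx (fun _ => p) ℓ k η ∧
        (∀ i, ℓ ≤ i → i < m → η i = η₀ i) ∧ ν η m = T.erase a := fun a ha => by
      obtain ⟨η, hη, hagree, hνη⟩ :=
        (Set.ext_iff.1 hEsets _).1 (coe_erase_subset_finite_ncard hTE hT ha)
      exact ⟨η, hη, hagree, hνη.symm⟩
    choose! η hη hagree hνη using hchild
    choose! y hy hylow hyhigh using fun a (ha : a ∈ T) =>
      ih (m := m + 1) (by omega) (by omega) (hη a ha) (by omega)
    refine ⟨∑ a ∈ T, y a, sum_mem hy, fun j hj => ?_, fun j hmj hjk => ?_⟩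
    · have hsame : ∀ a ∈ T, y a j = toBhat p mu (ν η₀) j := fun a ha => by
        rw [hylow a ha _ (by omega)]
        exact toBhat_apply_congr
          (hsys.2.1 _ _ (hη a ha) hη₀ m hℓm hmk (hagree a ha) j hj)
      rw [Finset.sum_apply, sum_congr rfl hsame, sum_const, hT, succ_nsmul,
        p_smul_apply_eq_zero_of_mem_powDivisible (toBhat_mem_powDivisible _), zero_add]
    · rw [Finset.sum_apply]
      rcases hmj.eq_or_lt with rfl | hmj
      · rw [sum_congr rfl fun a ha => hylow a ha _ (by omega)]
        exact sum_toBhat_apply_eq_zero hT _ hνη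
      · exact sum_eq_zero fun a ha => hyhigh a ha j hmj hjk

theorem IsJ4System.exists_mem_closure_eq_single (hsys : IsJ4System (fun _ => p) mu A ℓ k B ν)
    (hℓk : ℓ < k) {T : Finset (mu ℓ).ord.ToType} (hTB : ↑T ⊆ B) (hT : #T = p + 1)
    {a b : (mu ℓ).ord.ToType} (ha : a ∈ T) (hb : b ∈ T) :
    ∃ y ∈ AddSubgroup.closure (toBhat p mu '' A) ⊓ powDivisible p mu, ∀ j < k,
      y j = (Pi.single ℓ (p ^ ℓ • (Finsupp.single a 1 - Finsupp.single b 1)) : BProd p mu) j := by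
  have hη₀ : SeqIdx (fun _ => p) ℓ k fun _ => ↑(range p) := fun _ _ _ =>
    ⟨finite_toSet _, by rw [Set.ncard_coe_finset, card_range]⟩
  have hchild : ∀ c ∈ T, ∃ η, SeqIdx (fun _ => p) ℓ k η ∧ ν η ℓ = T.erase c := fun c hc => by
    obtain ⟨η, hη, hνη⟩ :=
      (Set.ext_iff.1 (hsys.2.2.1 _ hη₀ hℓk) _).1 (coe_erase_subset_finite_ncard hTB hT hc)
    exact ⟨η, hη, hνη.symm⟩
  obtain ⟨ηa, hηa, hνa⟩ := hchild a ha
  obtain ⟨ηb, hηb, hνb⟩ := hchild b hb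
  obtain ⟨ya, hya, hyalow, hyahigh⟩ := hsys.exists_mem_closure_toBhat ℓ.le_succ hℓk hηb
  obtain ⟨yb, hyb, hyblow, hybhigh⟩ := hsys.exists_mem_closure_toBhat ℓ.le_succ hℓk hηa
  refine ⟨ya - yb, sub_mem hya hyb, fun j hjk => ?_⟩
  rw [Pi.sub_apply]
  rcases lt_trichotomy j ℓ with hjℓ | rfl | hℓj
  · rw [hyalow j (by omega), hyblow j (by omega), Pi.single_eq_of_ne hjℓ.ne,
      toBhat_apply_congr (hsys.2.1 _ _ hηb hηa ℓ le_rfl hℓk.le (fun _ _ _ => by omega) j hjℓ),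
      sub_self]
  · rw [hyalow _ (Nat.lt_succ_self _), hyblow _ (Nat.lt_succ_self _), toBhat_apply_of_eq_coe hνb,
      toBhat_apply_of_eq_coe hνa, sum_erase_eq_sub hb, sum_erase_eq_sub ha, ← nsmul_sub,
      Pi.single_eq_same]
    congr 1
    abel
  · rw [hyahigh j hℓj hjk, hybhigh j hℓj hjk, sub_self, Pi.single_eq_of_ne hℓj.ne']

end J4System

theorem inJ4_preimage_toBhat {p : ℕ} (hp : 1 < p) {mu : ℕ → Cardinal} {A : Set (BProd p mu)}
    (hA : InI0 p mu A) : InJ4 (fun _ => p) mu (toBhat p mu ⁻¹' A) := by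
  obtain ⟨-, N, hN⟩ := hA
  rw [InJ4]
  by_contra! hsys
  obtain ⟨ℓ, hNℓ, B, -, hB, hsys⟩ := hsys N
  obtain ⟨T, hTB, hT⟩ := hB.exists_subset_card_eq (p + 1)
  obtain ⟨a, ha, b, hb, hab⟩ := one_lt_card.1 (by omega : 1 < #T)
  set x : BProd p mu := Pi.single ℓ (p ^ ℓ • (Finsupp.single a 1 - Finsupp.single b 1)) with hx
  have hxD : x ∈ powDivisible p mu := by
    intro j
    rcases eq_or_ne j ℓ with rfl | hjℓ
    · exact ⟨_, Pi.single_eq_same _ _⟩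
    · exact ⟨0, by rw [hx, Pi.single_eq_of_ne hjℓ, smul_zero]⟩
  have hxcl : x ∈ clBhat p mu (AddSubgroup.closure A) := by
    refine ⟨mem_bhatSet_of_mem_powDivisible hxD, fun n => ?_⟩
    obtain ⟨ν, hν⟩ := hsys (max (ℓ + 1) n) (by omega)
    obtain ⟨y, ⟨hyA, hyD⟩, hyx⟩ := hν.exists_mem_closure_eq_single (by omega) hTB hT ha hb
    obtain ⟨z, hz, hzxy⟩ := exists_mem_bhatSet_pow_smul_eq (sub_mem hxD hyD) (n := n)
      fun j hj => by rw [Pi.sub_apply, hyx j (by omega), sub_self]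
    exact ⟨y, AddSubgroup.closure_mono (Set.image_preimage_subset _ _) hyA, z, hz, hzxy⟩
  have hxFin : x ∈ BFin p mu := 
    (Set.finite_singleton ℓ).subset fun _ hj => by_contra fun hjℓ => hj (Pi.single_eq_of_ne hjℓ _)
  have hxℓ : x ℓ ≠ 0 := fun h => natCast_pow_ne_zero_zmod hp ℓ <| by
    simpa [hx, hab.symm] using DFunLike.congr_fun h a
  exact hxℓ (hN ℓ hNℓ ⟨hxcl, hxFin⟩ ℓ le_rfl)

theorem I1_ideal_proper_general (p : ℕ) (hp : p.Prime) (θ : Cardinal)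
    (mu : ℕ → Cardinal)
    (hJ : ¬ ∃ S : Set (Set (∀ ℓ, Set (mu ℓ).ord.ToType)),
      Cardinal.mk S ≤ θ ∧ (∀ A ∈ S, InJ4 (fun _ => p) mu A) ∧
      FullProd (fun _ => p) mu ⊆ ⋃₀ S) :
    ¬ ∃ S : Set (Set (BProd p mu)),
      Cardinal.mk S ≤ θ ∧ (∀ A ∈ S, InI0 p mu A) ∧ BhatSet p mu ⊆ ⋃₀ S := by
  rintro ⟨S, hS, hI0, hcover⟩
  refine hJ ⟨(toBhat p mu ⁻¹' ·) '' S, Cardinal.mk_image_le.trans hS, ?_, fun ν _ => ?_⟩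
  · rintro _ ⟨A, hA, rfl⟩
    exact inJ4_preimage_toBhat hp.one_lt (hI0 A hA)
  · obtain ⟨A, hA, hνA⟩ :=
      hcover (mem_bhatSet_of_mem_powDivisible (toBhat_mem_powDivisible ν))
    exact ⟨_, ⟨A, hA, rfl⟩, hνA⟩

/-- If `∏_{ℓ<ω}[μ_ℓ]^p` is not a union of at most `θ` many members of `J⁴_{t̄,μ̄}`
(`t_ℓ = p`), then `B̂_{μ̄}` is not a union of at most `θ` many members of `I⁰_{μ̄}`,
i.e. the ideal `I¹_{μ̄,θ}` is proper. -/
theorem I1_ideal_proper (p : ℕ) (hp : p.Prime) (θ : Cardinal)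
    (hθ : Cardinal.aleph0 ≤ θ) (mu : ℕ → Cardinal)
    (hJ : ¬ ∃ S : Set (Set (∀ ℓ, Set (mu ℓ).ord.ToType)),
      Cardinal.mk S ≤ θ ∧ (∀ A ∈ S, InJ4 (fun _ => p) mu A) ∧
      FullProd (fun _ => p) mu ⊆ ⋃₀ S) :
    ¬ ∃ S : Set (Set (BProd p mu)),
      Cardinal.mk S ≤ θ ∧ (∀ A ∈ S, InI0 p mu A) ∧ BhatSet p mu ⊆ ⋃₀ S :=
  I1_ideal_proper_general p hp θ mu hJ
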